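/- arXiv:1211.6419 — 3 statements merged into one kernel-verified Lean document; each statement's English description precedes it below -/
import Mathlib

section
/- Let X : ℝ → E be a map into a topological vector space E with F-norm ‖·‖ satisfying the stationary increment property: ‖X t - X s‖ = ‖X_{t-s} - X 0‖ for all s, t. Suppose that for every ε > 0 there exist t₀ ∈ ℝ and a set B of positive Lebesgue measure with ‖X t₀ - X s‖ < ε for all s ∈ B; then X is uniformly continuous in the F-norm, i.e., for every ε > 0 there is δ > 0 such that |t - s| < δ implies ‖X t - X s‖ ≤ 2ε. -/
open MeasureTheory Pointwise

/-- A process with stationary increments (in the F-norm sense) which is "close on a set of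
positive measure" is uniformly continuous in the F-norm. -/
theorem si_process_uniformly_continuous {E : Type*} [AddCommGroup E] (N : E → ℝ)
    (htri : ∀ u v : E, N (u + v) ≤ N u + N v) (hsym : ∀ u : E, N (-u) = N u)
    (X : ℝ → E)
    (hsi : ∀ t s : ℝ, N (X t - X s) = N (X (t - s) - X 0))
    (hB : ∀ ε : ℝ, 0 < ε → ∃ t₀ : ℝ, ∃ B : Set ℝ, MeasurableSet B ∧ 0 < volume B ∧
      ∀ s ∈ B, N (X t₀ - X s) < ε) :
    ∀ ε : ℝ, 0 < ε → ∃ δ : ℝ, 0 < δ ∧ ∀ t s : ℝ, |t - s| < δ → N (X t - X s) ≤ 2 * ε := by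
  intro ε hε
  obtain ⟨t₀, B, hBm, hBpos, hBclose⟩ := hB ε hε
  have hnhds : B - B ∈ nhds (0 : ℝ) :=
    MeasureTheory.Measure.sub_mem_nhds_zero_of_addHaar_pos volume B hBm hBpos
  obtain ⟨δ, hδ, hball⟩ := Metric.mem_nhds_iff.mp hnhds
  refine ⟨δ, hδ, fun t s hts => ?_⟩
  have : t - s ∈ B - B := hball (by simpa [Real.dist_eq] using hts)
  obtain ⟨u, hu, v, hv, huv⟩ := this
  have h1 : N (X t - X s) = N (X u - X v) := by
    rw [hsi t s, hsi u v]
    simp only [show u - v = t - s from huv]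
  have h2 : N (X u - X v) ≤ N (X u - X t₀) + N (X t₀ - X v) := by
    have := htri (X u - X t₀) (X t₀ - X v)
    simpa [sub_add_sub_cancel] using this
  have h3 : N (X u - X t₀) = N (X t₀ - X u) := by
    rw [← hsym (X t₀ - X u), neg_sub]
  have := hBclose u hu
  have := hBclose v hv
  rw [h1]
  have : N (X u - X v) < 2 * ε :=
    calc N (X u - X v) ≤ N (X u - X t₀) + N (X t₀ - X v) := h2
      _ < ε + ε := by rw [h3]; exact add_lt_add (hBclose u hu) (hBclose v hv)
      _ = 2 * ε := by ring
  exact this.le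
end

section
/- For α > 0, H ∈ (0,1) with H ≠ 1/α, and t > 0, the integral ∫_0^∞ |(t+s)^{H-1/α} - s^{H-1/α}|^α ds is finite. Moreover, if H ≥ 1 the integral diverges. -/
/-!
Write `β = H - 1/α`. By the mean value theorem `(t + s)^β - s^β = β t ξ^(β-1)` for some
`ξ ∈ (s, s + t)`, so for `s ≥ 1` the integrand is bounded above and below by constant multiples
of `s^(α(β-1))`, which is integrable at infinity iff `α(β-1) = αH - 1 - α < -1`, i.e. `H < 1`.
Near `0` the integrand is at most `s^(αβ) + (t + s)^(αβ)`, integrable since `αβ = αH - 1 > -1`.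
-/

open MeasureTheory Set Real

theorem exists_rpow_sub_rpow_eq_mul {a b : ℝ} (β : ℝ) (ha : 0 < a) (hab : a < b) :
    ∃ ξ ∈ Ioo a b, b ^ β - a ^ β = β * ξ ^ (β - 1) * (b - a) := by
  have hcont : ContinuousOn (fun x : ℝ => x ^ β) (Icc a b) := fun x hx =>
    (continuousAt_rpow_const x β (Or.inl (ha.trans_le hx.1).ne')).continuousWithinAt
  obtain ⟨ξ, hξ, hslope⟩ := exists_hasDerivAt_eq_slope (fun x : ℝ => x ^ β)
    (fun x => β * x ^ (β - 1)) hab hcont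
    fun x hx => hasDerivAt_rpow_const (Or.inl (ha.trans hx.1).ne')
  refine ⟨ξ, hξ, ?_⟩
  rw [hslope, div_mul_cancel₀ _ (sub_ne_zero.mpr hab.ne')]

theorem abs_sub_rpow_le_rpow_add_rpow {a b α : ℝ} (ha : 0 ≤ a) (hb : 0 ≤ b) (hα : 0 ≤ α) :
    |a - b| ^ α ≤ a ^ α + b ^ α := by
  rcases le_total a b with h | h
  · calc |a - b| ^ α ≤ b ^ α :=
          rpow_le_rpow (abs_nonneg _) (by rw [abs_sub_comm, abs_of_nonneg] <;> linarith) hα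
      _ ≤ a ^ α + b ^ α := le_add_of_nonneg_left (rpow_nonneg ha _)
  · calc |a - b| ^ α ≤ a ^ α :=
          rpow_le_rpow (abs_nonneg _) (by rw [abs_of_nonneg] <;> linarith) hα
      _ ≤ a ^ α + b ^ α := le_add_of_nonneg_right (rpow_nonneg hb _)

theorem rpow_neg_abs_mul_rpow_le_rpow {a x k γ : ℝ} (ha : 0 < a) (hax : a ≤ x) (hxk : x ≤ k * a) :
    k ^ (-|γ|) * a ^ γ ≤ x ^ γ := by
  have hk : 1 ≤ k := le_of_mul_le_mul_right (by linarith) ha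
  rcases le_total 0 γ with hγ | hγ
  · calc k ^ (-|γ|) * a ^ γ ≤ 1 * a ^ γ := by
          gcongr
          exact rpow_le_one_of_one_le_of_nonpos hk (by simp)
      _ ≤ x ^ γ := by rw [one_mul]; exact rpow_le_rpow ha.le hax hγ
  · rw [abs_of_nonpos hγ, neg_neg, ← mul_rpow (by linarith) ha.le]
    exact rpow_le_rpow_of_nonpos (ha.trans_le hax) hxk hγ

section Kernel

variable {α β t : ℝ}

theorem aestronglyMeasurable_abs_rpow_add_sub_rpow (μ : Measure ℝ) :
    AEStronglyMeasurable (fun s : ℝ => |(t + s) ^ β - s ^ β| ^ α) μ :=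
  (by fun_prop : Measurable _).aestronglyMeasurable

theorem abs_rpow_add_sub_rpow_le (ht : 0 < t) (hβ : β ≤ 1) {s : ℝ} (hs : 0 < s) :
    |(t + s) ^ β - s ^ β| ≤ |β| * t * s ^ (β - 1) := by
  obtain ⟨ξ, hξ, heq⟩ := exists_rpow_sub_rpow_eq_mul β hs (by linarith : s < t + s)
  have hξs : ξ ^ (β - 1) ≤ s ^ (β - 1) := rpow_le_rpow_of_nonpos hs hξ.1.le (by linarith)
  rw [heq, add_sub_cancel_right, abs_mul, abs_mul, abs_of_pos ht,
    abs_of_pos (rpow_pos_of_pos (hs.trans hξ.1) _)]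
  calc |β| * ξ ^ (β - 1) * t ≤ |β| * s ^ (β - 1) * t := by gcongr
    _ = |β| * t * s ^ (β - 1) := by ring

theorem mul_rpow_le_abs_rpow_add_sub_rpow (ht : 0 < t) {s : ℝ} (hs : 1 ≤ s) :
    |β| * t * (1 + t) ^ (-|β - 1|) * s ^ (β - 1) ≤ |(t + s) ^ β - s ^ β| := by
  have hs0 : 0 < s := by linarith
  obtain ⟨ξ, hξ, heq⟩ := exists_rpow_sub_rpow_eq_mul β hs0 (by linarith : s < t + s)
  have hξs : (1 + t) ^ (-|β - 1|) * s ^ (β - 1) ≤ ξ ^ (β - 1) :=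
    rpow_neg_abs_mul_rpow_le_rpow hs0 hξ.1.le (by nlinarith [hξ.2])
  rw [heq, add_sub_cancel_right, abs_mul, abs_mul, abs_of_pos ht,
    abs_of_pos (rpow_pos_of_pos (hs0.trans hξ.1) _)]
  calc |β| * t * (1 + t) ^ (-|β - 1|) * s ^ (β - 1)
      = |β| * ((1 + t) ^ (-|β - 1|) * s ^ (β - 1)) * t := by ring
    _ ≤ |β| * ξ ^ (β - 1) * t := by gcongr

theorem integrableOn_Ioc_abs_rpow_add_sub_rpow (hα : 0 ≤ α) (ht : 0 < t) (hβ : -1 < α * β) :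
    IntegrableOn (fun s : ℝ => |(t + s) ^ β - s ^ β| ^ α) (Ioc 0 1) := by
  have hpow : IntegrableOn (fun s : ℝ => s ^ (α * β)) (Ioc 0 1) :=
    (intervalIntegral.intervalIntegrable_rpow' hβ).1
  have hshift : IntegrableOn (fun s : ℝ => (t + s) ^ (α * β)) (Ioc 0 1) :=
    (ContinuousOn.integrableOn_Icc fun s hs => (continuousAt_const.add continuousAt_id
      |>.rpow_const (Or.inl (by linarith [hs.1] : t + s ≠ 0))).continuousWithinAt).mono_set
      Ioc_subset_Icc_self
  refine (hshift.add hpow).mono' (aestronglyMeasurable_abs_rpow_add_sub_rpow _)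
    (ae_restrict_of_forall_mem measurableSet_Ioc fun s hs => ?_)
  rw [Pi.add_apply, norm_of_nonneg (rpow_nonneg (abs_nonneg _) _), mul_comm α β,
    rpow_mul (by linarith [hs.1]), rpow_mul hs.1.le]
  exact abs_sub_rpow_le_rpow_add_rpow (rpow_nonneg (by linarith [hs.1]) _)
    (rpow_nonneg hs.1.le _) hα

theorem integrableOn_Ioi_one_abs_rpow_add_sub_rpow (hα : 0 < α) (ht : 0 < t)
    (hβ : α * (β - 1) < -1) :
    IntegrableOn (fun s : ℝ => |(t + s) ^ β - s ^ β| ^ α) (Ioi 1) := by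
  have hβ1 : β ≤ 1 := by nlinarith
  refine ((integrableOn_Ioi_rpow_of_lt hβ one_pos).const_mul ((|β| * t) ^ α)).mono'
    (aestronglyMeasurable_abs_rpow_add_sub_rpow _)
    (ae_restrict_of_forall_mem measurableSet_Ioi fun s hs => ?_)
  have hs0 : (0 : ℝ) < s := one_pos.trans hs
  rw [norm_of_nonneg (rpow_nonneg (abs_nonneg _) _), mul_comm α, rpow_mul hs0.le,
    ← mul_rpow (by positivity) (rpow_nonneg hs0.le _)]
  exact rpow_le_rpow (abs_nonneg _) (abs_rpow_add_sub_rpow_le ht hβ1 hs0) hα.le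

theorem integrableOn_Ioi_zero_abs_rpow_add_sub_rpow (hα : 0 < α) (ht : 0 < t)
    (hβ₀ : -1 < α * β) (hβ₁ : α * (β - 1) < -1) :
    IntegrableOn (fun s : ℝ => |(t + s) ^ β - s ^ β| ^ α) (Ioi 0) := by
  rw [← Ioc_union_Ioi_eq_Ioi zero_le_one, integrableOn_union]
  exact ⟨integrableOn_Ioc_abs_rpow_add_sub_rpow hα.le ht hβ₀,
    integrableOn_Ioi_one_abs_rpow_add_sub_rpow hα ht hβ₁⟩

theorem not_integrableOn_Ioi_zero_abs_rpow_add_sub_rpow (hα : 0 < α) (ht : 0 < t)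
    (hβ : β ≠ 0) (hβ₁ : -1 ≤ α * (β - 1)) :
    ¬ IntegrableOn (fun s : ℝ => |(t + s) ^ β - s ^ β| ^ α) (Ioi 0) := by
  intro hint
  set c := |β| * t * (1 + t) ^ (-|β - 1|)
  have hc : 0 < c := by have := abs_pos.mpr hβ; positivity
  have hpow : IntegrableOn (fun s : ℝ => s ^ (α * (β - 1))) (Ioi 1) := by
    refine ((hint.mono_set (Ioi_subset_Ioi zero_le_one)).const_mul (c ^ α)⁻¹).mono'
      (by fun_prop) (ae_restrict_of_forall_mem measurableSet_Ioi fun s hs => ?_)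
    have hs0 : (0 : ℝ) < s := one_pos.trans hs
    rw [norm_of_nonneg (rpow_nonneg hs0.le _), le_inv_mul_iff₀ (rpow_pos_of_pos hc _),
      mul_comm α, rpow_mul hs0.le, ← mul_rpow hc.le (rpow_nonneg hs0.le _)]
    exact rpow_le_rpow (by positivity) (mul_rpow_le_abs_rpow_add_sub_rpow ht hs.le) hα.le
  exact absurd ((integrableOn_Ioi_rpow_iff one_pos).mp hpow) (not_lt.mpr hβ₁)

end Kernel

/-- The kernel integrability condition for linear fractional stable motion:
for `H ∈ (0,1)`, `H ≠ 1/α`, `∫_0^∞ |(t+s)^{H-1/α} - s^{H-1/α}|^α ds < ∞`;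
for `H ≥ 1` the integral diverges. -/
theorem lfsm_kernel_integrability (α : ℝ) (hα : 0 < α) (t : ℝ) (ht : 0 < t) :
    (∀ H : ℝ, 0 < H → H < 1 → H ≠ 1 / α →
      IntegrableOn
        (fun s : ℝ => |(t + s) ^ (H - 1 / α) - s ^ (H - 1 / α)| ^ α) (Set.Ioi 0)) ∧
    (∀ H : ℝ, 1 ≤ H → H ≠ 1 / α →
      ¬ IntegrableOn
        (fun s : ℝ => |(t + s) ^ (H - 1 / α) - s ^ (H - 1 / α)| ^ α) (Set.Ioi 0)) := by
  have hscale (H : ℝ) : α * (H - 1 / α) = α * H - 1 := by field_simp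
  refine ⟨fun H hH₀ hH₁ _ => ?_, fun H hH hHα => ?_⟩
  · refine integrableOn_Ioi_zero_abs_rpow_add_sub_rpow hα ht ?_ ?_
    · rw [hscale]; nlinarith
    · rw [mul_sub, hscale]; nlinarith
  · refine not_integrableOn_Ioi_zero_abs_rpow_add_sub_rpow hα ht (sub_ne_zero.mpr hHα) ?_
    rw [mul_sub, hscale]; nlinarith
end

section
/- Let E be a complete normed space and f ∈ 𝓡_m([a,b], E), meaning that for every φ ∈ D⁻[a,b] the Riemann integral ∫_a^b φ(t) f(t) dt exists as a limit of Riemann sums. Define F(t) = ∫_a^t f(s) ds. Then F ∈ 𝓡_m([a,b], E) and for every φ ∈ D⁻[a,b], ∫_a^b φ(t) F(t) dt = ∫_a^b (∫_t^b φ(s) ds) f(t) dt. -/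
/-!
Put `ψ t = ∫ s in t..b, φ s`. It is Lipschitz, hence in `D⁻[a,b]`, so `J = ∫ ψ f` exists, and it
remains to see that the Riemann sums of `φ F` over fine tagged partitions `(t, ξ)` approach `J`.
Two uniform approximations drive this: since `φ` is regulated, `∑ᵢ |Δᵢ φ(ξᵢ) - ∫_{tᵢ}^{tᵢ₊₁} φ|`
is small (only boundedly many cells see a large oscillation of `φ`), and the partial Riemann sums
`Sₖ` of `f` are uniformly close to `F(tₖ)`, with `F` Lipschitz. Hence
`∑ Δᵢ φ(ξᵢ) F(ξᵢ) ≈ ∑ (ψ(tᵢ) - ψ(tᵢ₊₁)) Sᵢ₊₁ = ∑ ψ(tᵢ) Δᵢ f(ξᵢ) ≈ ∑ Δᵢ ψ(ξᵢ) f(ξᵢ)`,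
the middle equality being summation by parts with `ψ b = 0` and `S₀ = 0`.
-/

open MeasureTheory

/-- `f` has Riemann integral `I` over `[a,b]`: Riemann sums over tagged partitions
converge to `I` as the mesh tends to `0`. -/
def HasRiemannIntegral {E : Type*} [NormedAddCommGroup E] [NormedSpace ℝ E]
    (f : ℝ → E) (a b : ℝ) (I : E) : Prop :=
  ∀ ε : ℝ, 0 < ε → ∃ δ : ℝ, 0 < δ ∧ ∀ (n : ℕ) (t ξ : ℕ → ℝ),
    0 < n → t 0 = a → t n = b →
    (∀ i < n, t i < t (i + 1)) →
    (∀ i < n, t (i + 1) - t i < δ) →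
    (∀ i < n, ξ i ∈ Set.Icc (t i) (t (i + 1))) →
    ‖(∑ i ∈ Finset.range n, (t (i + 1) - t i) • f (ξ i)) - I‖ < ε

/-- `φ ∈ D⁻[a,b]`: left-continuous on `(a,b]` with right-hand limits on `[a,b)`. -/
def MemDminus (a b : ℝ) (φ : ℝ → ℝ) : Prop :=
  (∀ x ∈ Set.Ioc a b, Filter.Tendsto φ (nhdsWithin x (Set.Iio x)) (nhds (φ x))) ∧
  (∀ x ∈ Set.Ico a b, ∃ L : ℝ, Filter.Tendsto φ (nhdsWithin x (Set.Ioi x)) (nhds L))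

section

open Finset Set Filter Topology

variable {E : Type*} [NormedAddCommGroup E] [NormedSpace ℝ E]

theorem exists_lt_mem_Ioc {α : Type*} [LinearOrder α] {t : ℕ → α} {n : ℕ} {x : α}
    (h0 : t 0 < x) (hn : x ≤ t n) : ∃ i < n, x ∈ Ioc (t i) (t (i + 1)) := by
  induction n with
  | zero => exact absurd (h0.trans_le hn) (lt_irrefl _)
  | succ m ih =>
    rcases le_or_gt x (t m) with h | h
    · obtain ⟨i, hi, hx⟩ := ih h
      exact ⟨i, by omega, hx⟩
    · exact ⟨m, by omega, h, hn⟩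

structure IsTaggedPartition (a b : ℝ) (n : ℕ) (t ξ : ℕ → ℝ) : Prop where
  pos : 0 < n
  first : t 0 = a
  last : t n = b
  lt_succ : ∀ i < n, t i < t (i + 1)
  tag_mem : ∀ i < n, ξ i ∈ Icc (t i) (t (i + 1))

def MeshLT (δ : ℝ) (n : ℕ) (t : ℕ → ℝ) : Prop := ∀ i < n, t (i + 1) - t i < δ

noncomputable def riemannSum (f : ℝ → E) (n : ℕ) (t ξ : ℕ → ℝ) : E :=
  ∑ i ∈ range n, (t (i + 1) - t i) • f (ξ i)

theorem hasRiemannIntegral_iff {f : ℝ → E} {a b : ℝ} {I : E} :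
    HasRiemannIntegral f a b I ↔ ∀ ε > 0, ∃ δ > 0, ∀ n t ξ,
      IsTaggedPartition a b n t ξ → MeshLT δ n t → ‖riemannSum f n t ξ - I‖ < ε :=
  forall₂_congr fun _ _ => exists_congr fun _ => and_congr_right fun _ =>
    ⟨fun H n t ξ hp hm => H n t ξ hp.pos hp.first hp.last hp.lt_succ hm hp.tag_mem,
     fun H n t ξ h0 h1 h2 h3 hm h4 => H n t ξ ⟨h0, h1, h2, h3, h4⟩ hm⟩

theorem MeshLT.mono {δ δ' : ℝ} {n : ℕ} {t : ℕ → ℝ} (h : MeshLT δ n t) (hδ : δ ≤ δ') :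
    MeshLT δ' n t :=
  fun i hi => (h i hi).trans_le hδ

namespace IsTaggedPartition

variable {a b : ℝ} {n : ℕ} {t ξ : ℕ → ℝ}

theorem strictMonoOn (hp : IsTaggedPartition a b n t ξ) : StrictMonoOn t (Set.Iic n) :=
  strictMonoOn_Iic_of_lt_succ hp.lt_succ

theorem mem_Icc (hp : IsTaggedPartition a b n t ξ) {i : ℕ} (hi : i ≤ n) : t i ∈ Icc a b :=
  ⟨hp.first ▸ hp.strictMonoOn.monotoneOn (Nat.zero_le n) hi (Nat.zero_le i),
    hp.last ▸ hp.strictMonoOn.monotoneOn hi (Set.mem_Iic.2 le_rfl) hi⟩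

theorem tag_mem_Icc (hp : IsTaggedPartition a b n t ξ) {i : ℕ} (hi : i < n) : ξ i ∈ Icc a b :=
  ⟨(hp.mem_Icc hi.le).1.trans (hp.tag_mem i hi).1, (hp.tag_mem i hi).2.trans (hp.mem_Icc hi).2⟩

theorem sub_pos (hp : IsTaggedPartition a b n t ξ) {i : ℕ} (hi : i < n) : 0 < t (i + 1) - t i :=
  _root_.sub_pos.2 (hp.lt_succ i hi)

theorem lt (hp : IsTaggedPartition a b n t ξ) : a < b :=
  hp.first ▸ hp.last ▸ hp.strictMonoOn (Nat.zero_le n) (Set.mem_Iic.2 le_rfl) hp.pos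

theorem sum_sub (hp : IsTaggedPartition a b n t ξ) :
    ∑ i ∈ range n, (t (i + 1) - t i) = b - a := by
  rw [sum_range_sub, hp.first, hp.last]

theorem restrict (hp : IsTaggedPartition a b n t ξ) {k : ℕ} (hk : 0 < k) (hkn : k ≤ n) :
    IsTaggedPartition a (t k) k t ξ :=
  ⟨hk, hp.first, rfl, fun i hi => hp.lt_succ i (hi.trans_le hkn),
    fun i hi => hp.tag_mem i (hi.trans_le hkn)⟩

theorem sum_le (hp : IsTaggedPartition a b n t ξ) {x : ℕ → ℝ} {C : ℝ}
    (hx : ∀ i < n, x i ≤ C * (t (i + 1) - t i)) : ∑ i ∈ range n, x i ≤ C * (b - a) := by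
  rw [← hp.sum_sub, mul_sum]
  exact sum_le_sum fun i hi => hx i (mem_range.1 hi)

theorem norm_sum_le {F : Type*} [SeminormedAddCommGroup F] (hp : IsTaggedPartition a b n t ξ)
    {x : ℕ → F} {C : ℝ} (hx : ∀ i < n, ‖x i‖ ≤ C * (t (i + 1) - t i)) :
    ‖∑ i ∈ range n, x i‖ ≤ C * (b - a) :=
  (_root_.norm_sum_le _ _).trans (hp.sum_le (x := fun i => ‖x i‖) hx)

theorem norm_riemannSum_le (hp : IsTaggedPartition a b n t ξ) {f : ℝ → E} {M : ℝ}
    (hM : ∀ x ∈ Icc a b, ‖f x‖ ≤ M) : ‖riemannSum f n t ξ‖ ≤ M * (b - a) :=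
  hp.norm_sum_le fun i hi => by
    rw [norm_smul, Real.norm_of_nonneg (hp.sub_pos hi).le, mul_comm]
    exact mul_le_mul_of_nonneg_right (hM _ (hp.tag_mem_Icc hi)) (hp.sub_pos hi).le

theorem card_filter_exists_mem_Ico_le (hp : IsTaggedPartition a b n t ξ) (x : ℕ → ℝ) (N : ℕ)
    [DecidablePred fun i => ∃ k < N, x k ∈ Ico (t i) (t (i + 1))] :
    ((range n).filter fun i => ∃ k < N, x k ∈ Ico (t i) (t (i + 1))).card ≤ N := by
  classical
  -- each `x k` lies in at most one of the disjoint cells `[t i, t (i + 1))`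
  refine (card_le_card fun i hi => ?_).trans ((card_biUnion_le_card_mul (range N)
    (fun k => (range n).filter fun i => x k ∈ Ico (t i) (t (i + 1))) 1 fun k _ =>
      card_le_one.2 fun i hi j hj => ?_).trans (by simp))
  · obtain ⟨hi, k, hk, hxk⟩ := mem_filter.1 hi
    exact mem_biUnion.2 ⟨k, mem_range.2 hk, mem_filter.2 ⟨hi, hxk⟩⟩
  · simp only [mem_filter, Finset.mem_range] at hi hj
    by_contra hij
    rcases lt_or_gt_of_ne hij with h | h
    · have := hp.strictMonoOn.monotoneOn (show i + 1 ≤ n by omega) hj.1.le (Nat.succ_le_of_lt h)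
      linarith [hi.2.2, hj.2.1]
    · have := hp.strictMonoOn.monotoneOn (show j + 1 ≤ n by omega) hi.1.le (Nat.succ_le_of_lt h)
      linarith [hj.2.2, hi.2.1]

theorem append {c : ℝ} {n₂ : ℕ} {t₂ ξ₂ : ℕ → ℝ} (h₁ : IsTaggedPartition a c n t ξ)
    (h₂ : IsTaggedPartition c b n₂ t₂ ξ₂) {δ : ℝ} (m₁ : MeshLT δ n t) (m₂ : MeshLT δ n₂ t₂)
    (f : ℝ → E) :
    ∃ t' ξ', IsTaggedPartition a b (n + n₂) t' ξ' ∧ MeshLT δ (n + n₂) t' ∧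
      riemannSum f (n + n₂) t' ξ' = riemannSum f n t ξ + riemannSum f n₂ t₂ ξ₂ := by
  set t' : ℕ → ℝ := fun i => if i ≤ n then t i else t₂ (i - n)
  set ξ' : ℕ → ℝ := fun i => if i < n then ξ i else ξ₂ (i - n)
  have left : ∀ i < n, t' i = t i ∧ t' (i + 1) = t (i + 1) ∧ ξ' i = ξ i := fun i hi =>
    ⟨if_pos hi.le, if_pos hi, if_pos hi⟩
  have right : ∀ j, t' (n + j) = t₂ j ∧ ξ' (n + j) = ξ₂ j := by
    intro j
    refine ⟨?_, by simp [ξ']⟩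
    rcases j.eq_zero_or_pos with rfl | hj
    · simp [t', h₁.last, h₂.first]
    · simp [t', show ¬n + j ≤ n by omega]
  have cells : ∀ i < n + n₂, (i < n ∧ t' i = t i ∧ t' (i + 1) = t (i + 1) ∧ ξ' i = ξ i) ∨
      ∃ j < n₂, t' i = t₂ j ∧ t' (i + 1) = t₂ (j + 1) ∧ ξ' i = ξ₂ j := by
    intro i hi
    rcases lt_or_ge i n with h | h
    · exact .inl ⟨h, left i h⟩
    · obtain ⟨j, rfl⟩ := Nat.exists_eq_add_of_le h
      exact .inr ⟨j, by omega, (right j).1, (right (j + 1)).1, (right j).2⟩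
  refine ⟨t', ξ', ⟨by have := h₁.pos; omega, by simp [t', h₁.first], (right n₂).1.trans h₂.last,
    fun i hi => ?_, fun i hi => ?_⟩, fun i hi => ?_, ?_⟩
  · rcases cells i hi with ⟨h, e, e', -⟩ | ⟨j, hj, e, e', -⟩ <;> rw [e, e']
    exacts [h₁.lt_succ i h, h₂.lt_succ j hj]
  · rcases cells i hi with ⟨h, e, e', e''⟩ | ⟨j, hj, e, e', e''⟩ <;> rw [e, e', e'']
    exacts [h₁.tag_mem i h, h₂.tag_mem j hj]
  · rcases cells i hi with ⟨h, e, e', -⟩ | ⟨j, hj, e, e', -⟩ <;> rw [e, e']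
    exacts [m₁ i h, m₂ j hj]
  · rw [riemannSum, sum_range_add]
    congr 1
    · refine sum_congr rfl fun i hi => ?_
      obtain ⟨e, e', e''⟩ := left i (mem_range.1 hi)
      rw [e, e', e'']
    · refine sum_congr rfl fun j _ => ?_
      rw [add_assoc, (right j).1, (right (j + 1)).1, (right j).2]

end IsTaggedPartition

theorem exists_isTaggedPartition_meshLT {c d δ : ℝ} (hcd : c < d) (hδ : 0 < δ) :
    ∃ n t ξ, IsTaggedPartition c d n t ξ ∧ MeshLT δ n t := by
  obtain ⟨n, hn⟩ := exists_nat_gt ((d - c) / δ)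
  have hn0 : (0 : ℝ) < n := (div_pos (sub_pos.2 hcd) hδ).trans hn
  set h := (d - c) / n
  have hh : 0 < h := div_pos (sub_pos.2 hcd) hn0
  have hhδ : h < δ := by rwa [div_lt_iff₀ hn0, mul_comm, ← div_lt_iff₀ hδ]
  have step : ∀ i : ℕ, c + (i + 1 : ℕ) * h - (c + i * h) = h := fun i => by push_cast; ring
  refine ⟨n, fun i => c + i * h, fun i => c + i * h, ⟨by exact_mod_cast hn0, by simp,
    by simp only [h]; field_simp; ring, fun i _ => ?_, fun i _ => ⟨le_rfl, ?_⟩⟩,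
    fun i _ => (step i).trans_lt hhδ⟩ <;> linarith [step i]

namespace HasRiemannIntegral

variable {f g : ℝ → E} {a b : ℝ} {I : E}

theorem exists_bound (h : HasRiemannIntegral f a b I) (hab : a < b) :
    ∃ M, ∀ x ∈ Icc a b, ‖f x‖ ≤ M := by
  obtain ⟨δ, hδ, H⟩ := hasRiemannIntegral_iff.1 h 1 one_pos
  obtain ⟨n, t, ξ, hp, hm⟩ := exists_isTaggedPartition_meshLT hab hδ
  have retag : ∀ i < n, ∀ x ∈ Icc (t i) (t (i + 1)),
      IsTaggedPartition a b n t (Function.update t i x) := fun i _ x hx =>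
    { hp with
      tag_mem := fun j hj => by
        rcases eq_or_ne j i with rfl | hji
        · simpa using hx
        · simpa [hji] using (hp.lt_succ j hj).le }
  refine ⟨∑ i ∈ range n, (‖f (t i)‖ + 2 / (t (i + 1) - t i)), fun x hx => ?_⟩
  obtain ⟨i, hi, hxi⟩ : ∃ i < n, x ∈ Icc (t i) (t (i + 1)) := by
    rcases hx.1.eq_or_lt with rfl | hax
    · exact ⟨0, hp.pos, hp.first.le, (hp.first ▸ hp.lt_succ 0 hp.pos).le⟩
    · obtain ⟨i, hi, hxi⟩ := exists_lt_mem_Ioc (hp.first ▸ hax) (hp.last ▸ hx.2)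
      exact ⟨i, hi, Ioc_subset_Icc_self hxi⟩
  -- moving the single tag of the `i`-th cell to `x` changes the Riemann sum by less than `2`
  have hmove : riemannSum f n t (Function.update t i x) - riemannSum f n t t =
      (t (i + 1) - t i) • (f x - f (t i)) := by
    rw [riemannSum, riemannSum, ← sum_sub_distrib, sum_eq_single_of_mem i (mem_range.2 hi)]
    · simp [smul_sub]
    · intro j _ hji
      simp [hji]
  have hlt : (t (i + 1) - t i) * ‖f x - f (t i)‖ < 2 := by
    rw [← Real.norm_of_nonneg (hp.sub_pos hi).le, ← norm_smul, ← hmove]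
    calc _ ≤ ‖riemannSum f n t (Function.update t i x) - I‖ + ‖riemannSum f n t t - I‖ :=
          norm_sub_le_norm_sub_add_norm_sub _ _ _ |>.trans_eq (by rw [norm_sub_rev I])
      _ < 1 + 1 := add_lt_add (H _ _ _ (retag i hi x hxi) hm)
          (H _ _ _ (retag i hi (t i) ⟨le_rfl, (hp.lt_succ i hi).le⟩) hm |>.trans_eq' (by simp))
      _ = 2 := by norm_num
  calc ‖f x‖ ≤ ‖f (t i)‖ + ‖f x - f (t i)‖ := norm_le_insert' _ _
    _ ≤ ‖f (t i)‖ + 2 / (t (i + 1) - t i) := by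
        gcongr
        rw [le_div_iff₀ (hp.sub_pos hi), mul_comm]
        exact hlt.le
    _ ≤ _ := single_le_sum (f := fun i => ‖f (t i)‖ + 2 / (t (i + 1) - t i))
        (fun j hj => add_nonneg (norm_nonneg _) (div_nonneg zero_le_two
          (hp.sub_pos (mem_range.1 hj)).le)) (mem_range.2 hi)

theorem congr_of_eqOn_Ioc (h : HasRiemannIntegral f a b I) (hfg : EqOn f g (Ioc a b)) :
    HasRiemannIntegral g a b I := by
  rw [hasRiemannIntegral_iff] at h ⊢
  intro ε hε
  obtain ⟨δ, hδ, H⟩ := h (ε / 2) (half_pos hε)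
  set C := ‖g a - f a‖ + 1
  have hC : 0 < C := by positivity
  refine ⟨min δ (ε / (2 * C)), by positivity, fun n t ξ hp hm => ?_⟩
  -- only the first tag can be `a`, where `f` and `g` may differ
  have hdiff : riemannSum g n t ξ - riemannSum f n t ξ = (t 1 - t 0) • (g (ξ 0) - f (ξ 0)) := by
    rw [riemannSum, riemannSum, ← sum_sub_distrib, sum_eq_single_of_mem 0 (mem_range.2 hp.pos)]
    · simp [smul_sub]
    · intro i hi hi0
      have hai : a < ξ i := hp.first ▸ (hp.strictMonoOn (Nat.zero_le n)
        (mem_range.1 hi).le (Nat.pos_of_ne_zero hi0)).trans_le (hp.tag_mem i (mem_range.1 hi)).1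
      rw [hfg ⟨hai, (hp.tag_mem_Icc (mem_range.1 hi)).2⟩, sub_self]
  have hfirst : ‖g (ξ 0) - f (ξ 0)‖ ≤ ‖g a - f a‖ := by
    rcases eq_or_ne (ξ 0) a with h0 | h0
    · rw [h0]
    · rw [hfg ⟨(hp.tag_mem_Icc hp.pos).1.lt_of_ne' h0, (hp.tag_mem_Icc hp.pos).2⟩, sub_self,
        norm_zero]
      exact norm_nonneg _
  have hsmall : ‖riemannSum g n t ξ - riemannSum f n t ξ‖ ≤ ε / 2 := by
    rw [hdiff, norm_smul, Real.norm_of_nonneg (hp.sub_pos hp.pos).le]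
    calc (t 1 - t 0) * ‖g (ξ 0) - f (ξ 0)‖ ≤ ε / (2 * C) * C := by
          gcongr
          · exact ((hm.mono (min_le_right _ _)) 0 hp.pos).le
          · linarith
      _ = ε / 2 := by rw [div_mul_eq_mul_div, mul_div_mul_right _ _ hC.ne']
  calc ‖riemannSum g n t ξ - I‖
      ≤ ‖riemannSum g n t ξ - riemannSum f n t ξ‖ + ‖riemannSum f n t ξ - I‖ :=
        norm_sub_le_norm_sub_add_norm_sub _ _ _
    _ < ε / 2 + ε / 2 := add_lt_add_of_le_of_lt hsmall (H n t ξ hp (hm.mono (min_le_left _ _)))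
    _ = ε := add_halves ε

end HasRiemannIntegral

section Primitive

variable {f F : ℝ → E} {a b : ℝ}

theorem exists_forall_norm_riemannSum_sub_le (hab : a ≤ b)
    (hF : ∀ t ∈ Icc a b, HasRiemannIntegral f a t (F t)) {ε : ℝ} (hε : 0 < ε) :
    ∃ δ > 0, ∀ d ∈ Ioc a b, ∀ n t ξ, IsTaggedPartition a d n t ξ → MeshLT δ n t →
      ‖riemannSum f n t ξ - F d‖ ≤ ε := by
  obtain ⟨δ, hδ, H⟩ := hasRiemannIntegral_iff.1 (hF b ⟨hab, le_rfl⟩) (ε / 2) (half_pos hε)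
  refine ⟨δ, hδ, fun d hd n t ξ hp hm => ?_⟩
  rcases hd.2.eq_or_lt with rfl | hdb
  · exact (H n t ξ hp hm).le.trans (half_le_self hε.le)
  -- Complete the given partition and a much finer one of `[a, d]` by the same partition of
  -- `[d, b]`: both completions are `δ`-fine, so their Riemann sums are `ε / 2`-close to `F b`.
  refine le_of_forall_pos_le_add fun η hη => ?_
  obtain ⟨δd, hδd, Hd⟩ := hasRiemannIntegral_iff.1 (hF d (Ioc_subset_Icc_self hd)) η hη
  obtain ⟨k, u, ζ, hq, hqm⟩ := exists_isTaggedPartition_meshLT hd.1 (lt_min hδ hδd)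
  obtain ⟨m, v, χ, hr, hrm⟩ := exists_isTaggedPartition_meshLT hdb hδ
  obtain ⟨t₁, ξ₁, hp₁, hm₁, e₁⟩ := hp.append hr hm hrm f
  obtain ⟨t₂, ξ₂, hp₂, hm₂, e₂⟩ := hq.append hr (hqm.mono (min_le_left _ _)) hrm f
  have h₁ := H _ _ _ hp₁ hm₁
  have h₂ := H _ _ _ hp₂ hm₂
  have h₃ := Hd k u ζ hq (hqm.mono (min_le_right _ _))
  rw [e₁] at h₁
  rw [e₂] at h₂
  set P := riemannSum f n t ξ
  set Q := riemannSum f k u ζ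
  set R := riemannSum f m v χ
  calc ‖P - F d‖ = ‖(P + R - F b) - (Q + R - F b) + (Q - F d)‖ := by congr 1; abel
    _ ≤ ‖P + R - F b‖ + ‖Q + R - F b‖ + ‖Q - F d‖ :=
        (norm_add_le _ _).trans (add_le_add_left (norm_sub_le _ _) _)
    _ ≤ ε + η := by linarith

theorem exists_forall_norm_update_sub_riemannSum_le (hab : a ≤ b)
    (hF : ∀ t ∈ Icc a b, HasRiemannIntegral f a t (F t)) {ε : ℝ} (hε : 0 < ε) :
    ∃ δ > 0, ∀ n t ξ, IsTaggedPartition a b n t ξ → MeshLT δ n t → ∀ k ≤ n,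
      ‖Function.update F a 0 (t k) - riemannSum f k t ξ‖ ≤ ε := by
  obtain ⟨δ, hδ, H⟩ := exists_forall_norm_riemannSum_sub_le hab hF hε
  refine ⟨δ, hδ, fun n t ξ hp hm k hk => ?_⟩
  rcases k.eq_zero_or_pos with rfl | hk0
  · simp [hp.first, riemannSum, hε.le]
  · have hak : a < t k := hp.first ▸ hp.strictMonoOn (Nat.zero_le n) hk hk0
    rw [Function.update_of_ne hak.ne', norm_sub_rev]
    exact H (t k) ⟨hak, (hp.mem_Icc hk).2⟩ k t ξ (hp.restrict hk0 hk)
      fun i hi => hm i (hi.trans_le hk)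

theorem norm_update_sub_update_le (hab : a ≤ b)
    (hF : ∀ t ∈ Icc a b, HasRiemannIntegral f a t (F t)) {M : ℝ}
    (hM : ∀ x ∈ Icc a b, ‖f x‖ ≤ M) {u v : ℝ} (hau : a ≤ u) (huv : u ≤ v) (hvb : v ≤ b) :
    ‖Function.update F a 0 v - Function.update F a 0 u‖ ≤ M * (v - u) := by
  rcases huv.eq_or_lt with rfl | huv
  · simp
  refine le_of_forall_pos_le_add fun η hη => ?_
  obtain ⟨δ, hδ, H⟩ := exists_forall_norm_riemannSum_sub_le hab hF (half_pos hη)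
  obtain ⟨m, s, ζ, hq, hqm⟩ := exists_isTaggedPartition_meshLT huv hδ
  set Q := riemannSum f m s ζ
  have hQ : ‖Q‖ ≤ M * (v - u) :=
    hq.norm_riemannSum_le fun x hx => hM x ⟨hau.trans hx.1, hx.2.trans hvb⟩
  have hav : a < v := hau.trans_lt huv
  rw [Function.update_of_ne hav.ne']
  rcases hau.eq_or_lt with rfl | hau
  · have h₁ := H v ⟨hav, hvb⟩ m s ζ hq hqm
    rw [Function.update_self, sub_zero]
    calc ‖F v‖ ≤ ‖Q‖ + ‖Q - F v‖ := norm_le_insert _ _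
      _ ≤ M * (v - a) + η := by linarith
  · obtain ⟨k, r, χ, hr, hrm⟩ := exists_isTaggedPartition_meshLT hau hδ
    obtain ⟨t', ξ', hp', hm', e⟩ := hr.append hq hrm hqm f
    have h₁ := H v ⟨hav, hvb⟩ _ _ _ hp' hm'
    have h₂ := H u ⟨hau, huv.le.trans hvb⟩ k r χ hr hrm
    rw [e] at h₁
    set R := riemannSum f k r χ
    rw [Function.update_of_ne hau.ne']
    calc ‖F v - F u‖ = ‖(R - F u) - (R + Q - F v) + Q‖ := by congr 1; abel
      _ ≤ ‖R - F u‖ + ‖R + Q - F v‖ + ‖Q‖ :=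
          (norm_add_le _ _).trans (add_le_add_left (norm_sub_le _ _) _)
      _ ≤ M * (v - u) + η := by linarith

theorem exists_forall_norm_update_tag_sub_riemannSum_le (hab : a ≤ b)
    (hF : ∀ t ∈ Icc a b, HasRiemannIntegral f a t (F t)) {M : ℝ}
    (hM : ∀ x ∈ Icc a b, ‖f x‖ ≤ M) {ε : ℝ} (hε : 0 < ε) :
    ∃ δ > 0, ∀ n t ξ, IsTaggedPartition a b n t ξ → MeshLT δ n t → ∀ i < n,
      ‖Function.update F a 0 (ξ i) - riemannSum f (i + 1) t ξ‖ ≤ ε := by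
  have hM0 : 0 ≤ M := (norm_nonneg _).trans (hM a (left_mem_Icc.2 hab))
  obtain ⟨δ, hδ, H⟩ := exists_forall_norm_update_sub_riemannSum_le hab hF (half_pos hε)
  refine ⟨min δ (ε / (2 * (M + 1))), by positivity, fun n t ξ hp hm i hi => ?_⟩
  have htag := hp.tag_mem i hi
  have hmesh : M * (t (i + 1) - ξ i) ≤ ε / 2 := by
    calc M * (t (i + 1) - ξ i) ≤ (M + 1) * (ε / (2 * (M + 1))) :=
          mul_le_mul (by linarith) (by linarith [hm.mono (min_le_right _ _) i hi, htag.1])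
            (by linarith [htag.2]) (by linarith)
      _ = ε / 2 := by field_simp
  calc _ ≤ ‖Function.update F a 0 (t (i + 1)) - Function.update F a 0 (ξ i)‖ +
        ‖Function.update F a 0 (t (i + 1)) - riemannSum f (i + 1) t ξ‖ := by
        rw [norm_sub_rev (Function.update F a 0 (t (i + 1)))]
        exact norm_sub_le_norm_sub_add_norm_sub _ _ _
    _ ≤ ε / 2 + ε / 2 := add_le_add
        ((norm_update_sub_update_le hab hF hM (hp.tag_mem_Icc hi).1 htag.2 (hp.mem_Icc hi).2).trans
          hmesh) (H n t ξ hp (hm.mono (min_le_left _ _)) (i + 1) hi)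
    _ = ε := add_halves ε

end Primitive

theorem IntervalIntegrable.mono_of_mem_Icc {f : ℝ → ℝ} {a b u v : ℝ}
    (h : IntervalIntegrable f volume a b) (hab : a ≤ b) (hu : u ∈ Icc a b) (hv : v ∈ Icc a b) :
    IntervalIntegrable f volume u v :=
  h.mono_set (uIcc_subset_uIcc (by rwa [uIcc_of_le hab]) (by rwa [uIcc_of_le hab]))

theorem abs_mul_sub_integral_le {φ : ℝ → ℝ} {u v y C : ℝ} (huv : u ≤ v)
    (hφ : IntervalIntegrable φ volume u v) (hC : ∀ s ∈ Ioc u v, |φ y - φ s| ≤ C) :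
    |(v - u) * φ y - ∫ s in u..v, φ s| ≤ C * (v - u) := by
  have h := intervalIntegral.norm_integral_le_of_norm_le_const
    (f := fun s => φ y - φ s) (by rwa [uIoc_of_le huv])
  rwa [intervalIntegral.integral_sub intervalIntegrable_const hφ, intervalIntegral.integral_const,
    smul_eq_mul, Real.norm_eq_abs, abs_of_nonneg (sub_nonneg.2 huv)] at h

theorem integral_sub_integral_eq {φ : ℝ → ℝ} {a b x y : ℝ} (hφ : IntervalIntegrable φ volume a b)
    (hab : a ≤ b) (hx : x ∈ Icc a b) (hy : y ∈ Icc a b) :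
    (∫ s in x..b, φ s) - ∫ s in y..b, φ s = ∫ s in x..y, φ s := by
  rw [← intervalIntegral.integral_add_adjacent_intervals (hφ.mono_of_mem_Icc hab hx hy)
    (hφ.mono_of_mem_Icc hab hy (right_mem_Icc.2 hab)), add_sub_cancel_right]

theorem abs_integral_sub_integral_le {φ : ℝ → ℝ} {a b x y M : ℝ}
    (hφ : IntervalIntegrable φ volume a b) (hab : a ≤ b) (hM : ∀ s ∈ Icc a b, |φ s| ≤ M)
    (hx : x ∈ Icc a b) (hy : y ∈ Icc a b) (hxy : x ≤ y) :
    |(∫ s in x..b, φ s) - ∫ s in y..b, φ s| ≤ M * (y - x) := by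
  rw [integral_sub_integral_eq hφ hab hx hy, ← Real.norm_eq_abs, ← abs_of_nonneg (sub_nonneg.2 hxy)]
  refine intervalIntegral.norm_integral_le_of_norm_le_const fun s hs => hM s ?_
  rw [uIoc_of_le hxy] at hs
  exact ⟨hx.1.trans hs.1.le, hs.2.trans hy.2⟩

theorem memDminus_of_continuousOn {a b : ℝ} {φ : ℝ → ℝ} (h : ContinuousOn φ (Icc a b)) :
    MemDminus a b φ :=
  ⟨fun x hx => (h x (Ioc_subset_Icc_self hx)).mono_of_mem_nhdsWithin (Icc_mem_nhdsLT_of_mem hx),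
    fun x hx => ⟨φ x,
      (h x (Ico_subset_Icc_self hx)).mono_of_mem_nhdsWithin (Icc_mem_nhdsGT_of_mem hx)⟩⟩


structure IsOscillationPartition (φ : ℝ → ℝ) (ε a d : ℝ) (N : ℕ) (x : ℕ → ℝ) : Prop where
  first : x 0 = a
  last : x N = d
  lt_succ : ∀ k < N, x k < x (k + 1)
  abs_sub_le : ∀ k < N, ∀ u ∈ Ioc (x k) (x (k + 1)), ∀ v ∈ Ioc (x k) (x (k + 1)),
    |φ u - φ v| ≤ ε

namespace IsOscillationPartition

variable {φ : ℝ → ℝ} {ε a b d : ℝ} {N : ℕ} {x : ℕ → ℝ}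

theorem snoc (hx : IsOscillationPartition φ ε a d N x) {d' : ℝ} (hd : d < d')
    (hosc : ∀ u ∈ Ioc d d', ∀ v ∈ Ioc d d', |φ u - φ v| ≤ ε) :
    ∃ x', IsOscillationPartition φ ε a d' (N + 1) x' := by
  refine ⟨fun k => if k ≤ N then x k else d', by simp [hx.first], by simp, fun k hk => ?_,
    fun k hk => ?_⟩
  · rcases (Nat.lt_succ_iff.1 hk).lt_or_eq with hk | rfl
    · simpa [hk.le, Nat.succ_le_of_lt hk] using hx.lt_succ k hk
    · simpa [hx.last] using hd
  · rcases (Nat.lt_succ_iff.1 hk).lt_or_eq with hk | rfl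
    · simpa [hk.le, Nat.succ_le_of_lt hk] using hx.abs_sub_le k hk
    · simpa [hx.last] using hosc

theorem pos (hx : IsOscillationPartition φ ε a d N x) (had : a < d) : 0 < N :=
  Nat.pos_of_ne_zero fun hN => had.ne (hx.first.symm.trans (hN ▸ hx.last))

theorem exists_lt_of_forall_notMem_Ico (hx : IsOscillationPartition φ ε a b N x) {u v : ℝ}
    (hau : a ≤ u) (huv : u < v) (hvb : v ≤ b) (hgood : ∀ k < N, x k ∉ Ico u v) :
    ∃ k < N, x k < u ∧ v ≤ x (k + 1) := by
  have hN := hx.pos (hau.trans_lt (huv.trans_le hvb))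
  have hau : a < u := hau.lt_of_ne fun h => hgood 0 hN ⟨(hx.first.trans h).ge, hx.first ▸ h ▸ huv⟩
  obtain ⟨k, hk, hk₁, hk₂⟩ := exists_lt_mem_Ioc (hx.first ▸ hau) (hx.last ▸ (huv.trans_le hvb).le)
  refine ⟨k, hk, hk₁, not_lt.1 fun hvx => ?_⟩
  rcases (show k + 1 ≤ N by omega).lt_or_eq with hk' | hk'
  · exact hgood (k + 1) hk' ⟨hk₂, hvx⟩
  · rw [hk', hx.last] at hvx
    exact hvx.not_ge hvb

theorem abs_sum_indicator_sub_le (hx : IsOscillationPartition φ ε a b N x) {s : ℝ}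
    (hs : s ∈ Ioc a b) :
    |∑ k ∈ range N, (Ioc (x k) (x (k + 1))).indicator (fun _ => φ (x (k + 1))) s - φ s| ≤ ε := by
  obtain ⟨k, hk, hsk⟩ := exists_lt_mem_Ioc (hx.first ▸ hs.1) (hx.last ▸ hs.2)
  have hmono : MonotoneOn x (Set.Iic N) := (strictMonoOn_Iic_of_lt_succ hx.lt_succ).monotoneOn
  rw [sum_eq_single_of_mem k (mem_range.2 hk), indicator_of_mem hsk]
  · exact hx.abs_sub_le k hk _ ⟨hx.lt_succ k hk, le_rfl⟩ s hsk
  · intro j hj hjk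
    have hj := mem_range.1 hj
    refine indicator_of_notMem (fun hsj => ?_) _
    rcases hjk.lt_or_gt with h | h
    · have := hmono (show j + 1 ≤ N by omega) hk.le (show j + 1 ≤ k by omega)
      linarith [hsj.2, hsk.1]
    · have := hmono (show k + 1 ≤ N by omega) hj.le (show k + 1 ≤ j by omega)
      linarith [hsk.2, hsj.1]

end IsOscillationPartition

namespace MemDminus

variable {a b : ℝ} {φ : ℝ → ℝ}

theorem exists_Ioc_abs_sub_le_left (hφ : MemDminus a b φ) {c : ℝ} (hc : c ∈ Ioc a b) {ε : ℝ}
    (hε : 0 < ε) : ∃ l < c, ∀ u ∈ Ioc l c, ∀ v ∈ Ioc l c, |φ u - φ v| ≤ ε := by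
  obtain ⟨l, hl, hsub⟩ := mem_nhdsLT_iff_exists_Ioo_subset.1
    (Metric.tendsto_nhds.1 (hφ.1 c hc) (ε / 2) (half_pos hε))
  have hclose : ∀ u ∈ Ioc l c, |φ u - φ c| ≤ ε / 2 := fun u hu => by
    rcases hu.2.lt_or_eq with hu' | rfl
    · exact (hsub ⟨hu.1, hu'⟩).le
    · simpa using (half_pos hε).le
  refine ⟨l, hl, fun u hu v hv => (abs_sub_le _ (φ c) _).trans ?_⟩
  rw [abs_sub_comm (φ c)]
  linarith [hclose u hu, hclose v hv]

theorem exists_Ioc_abs_sub_le_right (hφ : MemDminus a b φ) {c : ℝ} (hc : c ∈ Ico a b) {ε : ℝ}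
    (hε : 0 < ε) : ∃ r, c < r ∧ r ≤ b ∧ ∀ u ∈ Ioc c r, ∀ v ∈ Ioc c r, |φ u - φ v| ≤ ε := by
  obtain ⟨L, hL⟩ := hφ.2 c hc
  obtain ⟨r, hr, hsub⟩ := mem_nhdsGT_iff_exists_Ioo_subset.1
    (Metric.tendsto_nhds.1 hL (ε / 2) (half_pos hε))
  obtain ⟨r', hcr', hr'⟩ := exists_between (lt_min hc.2 (mem_Ioi.1 hr))
  have hclose : ∀ u ∈ Ioc c r', |φ u - L| < ε / 2 := fun u hu =>
    hsub ⟨hu.1, hu.2.trans_lt (hr'.trans_le (min_le_right _ _))⟩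
  refine ⟨r', hcr', (hr'.trans_le (min_le_left _ _)).le, fun u hu v hv =>
    (abs_sub_le _ L _).trans ?_⟩
  rw [abs_sub_comm L]
  linarith [hclose u hu, hclose v hv]

theorem exists_isOscillationPartition (hφ : MemDminus a b φ) (hab : a < b) {ε : ℝ}
    (hε : 0 < ε) : ∃ N x, IsOscillationPartition φ ε a b N x := by
  set A := {d ∈ Icc a b | ∃ N x, IsOscillationPartition φ ε a d N x}
  have haA : a ∈ A := ⟨left_mem_Icc.2 hab.le, 0, fun _ => a, rfl, rfl, by simp, by simp⟩
  have hA : BddAbove A := ⟨b, fun d hd => hd.1.2⟩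
  have hac : a ≤ sSup A := le_csSup hA haA
  have hcb : sSup A ≤ b := csSup_le ⟨a, haA⟩ fun d hd => hd.1.2
  -- the supremum is attained, by left-continuity
  have hcA : sSup A ∈ A := by
    rcases hac.eq_or_lt with h | hac'
    · exact h ▸ haA
    obtain ⟨l, hl, hosc⟩ := hφ.exists_Ioc_abs_sub_le_left ⟨hac', hcb⟩ hε
    obtain ⟨d, hdA, hd⟩ := exists_lt_of_lt_csSup ⟨a, haA⟩ (max_lt hl hac')
    rcases (le_csSup hA hdA).lt_or_eq with hdc | hdc
    · obtain ⟨N, x, hx⟩ := hdA.2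
      have hld : l < d := (le_max_left _ _).trans_lt hd
      exact ⟨⟨hac, hcb⟩, N + 1, hx.snoc hdc fun u hu v hv =>
        hosc u ⟨hld.trans hu.1, hu.2⟩ v ⟨hld.trans hv.1, hv.2⟩⟩
    · exact hdc ▸ hdA
  -- and it is `b`, by the existence of right limits
  obtain ⟨N, x, hx⟩ := hcA.2
  rcases hcb.lt_or_eq with hcb | hcb
  · obtain ⟨r, hr, hrb, hosc⟩ := hφ.exists_Ioc_abs_sub_le_right ⟨hac, hcb⟩ hε
    obtain ⟨x', hx'⟩ := hx.snoc hr hosc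
    exact absurd (le_csSup hA ⟨⟨hac.trans hr.le, hrb⟩, _, x', hx'⟩) hr.not_ge
  · exact ⟨N, x, hcb ▸ hx⟩

theorem exists_bound (hφ : MemDminus a b φ) (hab : a < b) : ∃ M, ∀ x ∈ Icc a b, |φ x| ≤ M := by
  obtain ⟨N, y, hy⟩ := hφ.exists_isOscillationPartition hab one_pos
  refine ⟨|φ a| + ∑ k ∈ range N, (|φ (y (k + 1))| + 1), fun x hx => ?_⟩
  have hsum : 0 ≤ ∑ k ∈ range N, (|φ (y (k + 1))| + 1) := sum_nonneg fun _ _ => by positivity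
  rcases hx.1.eq_or_lt with rfl | hax
  · linarith
  obtain ⟨k, hk, hxk⟩ := exists_lt_mem_Ioc (hy.first ▸ hax) (hy.last ▸ hx.2)
  have hcell := hy.abs_sub_le k hk x hxk (y (k + 1)) ⟨hy.lt_succ k hk, le_rfl⟩
  have hterm := single_le_sum (f := fun k => |φ (y (k + 1))| + 1)
    (fun _ _ => by positivity) (mem_range.2 hk)
  linarith [abs_sub_abs_le_abs_sub (φ x) (φ (y (k + 1))), abs_nonneg (φ a)]

theorem intervalIntegrable (hφ : MemDminus a b φ) (hab : a < b) :
    IntervalIntegrable φ volume a b := by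
  obtain ⟨M, hM⟩ := hφ.exists_bound hab
  have approx : ∀ m : ℕ, ∃ g : ℝ → ℝ, Measurable g ∧
      ∀ s ∈ Ioc a b, |g s - φ s| ≤ 1 / (m + 1) := fun m => by
    obtain ⟨N, x, hx⟩ := hφ.exists_isOscillationPartition hab (Nat.one_div_pos_of_nat (n := m))
    exact ⟨_, Finset.measurable_sum _ fun k _ => measurable_const.indicator measurableSet_Ioc,
      fun s hs => hx.abs_sum_indicator_sub_le hs⟩
  choose g hgm hg using approx
  rw [intervalIntegrable_iff_integrableOn_Ioc_of_le hab.le]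
  refine ⟨aestronglyMeasurable_of_tendsto_ae atTop (fun m => (hgm m).aestronglyMeasurable) ?_,
    HasFiniteIntegral.restrict_of_bounded M measure_Ioc_lt_top ?_⟩
  · filter_upwards [ae_restrict_mem measurableSet_Ioc] with s hs
    exact tendsto_iff_norm_sub_tendsto_zero.2 (squeeze_zero (fun _ => norm_nonneg _)
      (fun m => hg m s hs) tendsto_one_div_add_atTop_nhds_zero_nat)
  · filter_upwards [ae_restrict_mem measurableSet_Ioc] with s hs
    exact hM s (Ioc_subset_Icc_self hs)

theorem integral_right (hφ : MemDminus a b φ) (hab : a < b) :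
    MemDminus a b fun t => ∫ s in t..b, φ s := by
  refine memDminus_of_continuousOn ?_
  have h := intervalIntegral.continuousOn_primitive_interval_left
    ((intervalIntegrable_iff' (μ := volume)).1 (hφ.intervalIntegrable hab))
  rwa [uIcc_of_le hab.le] at h

theorem exists_sum_abs_mul_sub_integral_le (hφ : MemDminus a b φ) (hab : a < b) {ε : ℝ}
    (hε : 0 < ε) : ∃ δ > 0, ∀ n t ξ, IsTaggedPartition a b n t ξ → MeshLT δ n t →
      ∑ i ∈ range n, |(t (i + 1) - t i) * φ (ξ i) - ∫ s in t i..t (i + 1), φ s| ≤ ε := by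
  obtain ⟨M, hM⟩ := hφ.exists_bound hab
  have hM0 : 0 ≤ M := (abs_nonneg _).trans (hM a (left_mem_Icc.2 hab.le))
  have hφi := hφ.intervalIntegrable hab
  obtain ⟨N, x, hx⟩ := hφ.exists_isOscillationPartition hab
    (by positivity : 0 < ε / (2 * (b - a)))
  set δ := ε / (4 * (N + 1) * (M + 1))
  have hNδ : N * (2 * M * δ) ≤ ε / 2 := by
    simp only [δ]
    rw [mul_div_assoc', mul_div_assoc', div_le_div_iff₀ (by positivity) two_pos]
    nlinarith [mul_nonneg hM0 (N.cast_nonneg : (0 : ℝ) ≤ N)]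
  refine ⟨δ, by positivity, fun n t ξ hp hm => ?_⟩
  classical
  set bad : ℕ → Prop := fun i => ∃ k < N, x k ∈ Ico (t i) (t (i + 1))
  have hcard : ((range n).filter bad).card ≤ N := hp.card_filter_exists_mem_Ico_le x N
  have hterm : ∀ i < n, |(t (i + 1) - t i) * φ (ξ i) - ∫ s in t i..t (i + 1), φ s| ≤
      ε / (2 * (b - a)) * (t (i + 1) - t i) + if bad i then 2 * M * δ else 0 := by
    intro i hi
    have hφi' := hφi.mono_of_mem_Icc hab.le (hp.mem_Icc hi.le) (hp.mem_Icc hi)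
    have htag := hp.tag_mem i hi
    by_cases hbad : bad i
    · rw [if_pos hbad]
      refine (abs_mul_sub_integral_le (C := 2 * M) (hp.lt_succ i hi).le hφi'
        fun s hs => ?_).trans ?_
      · have hs' : s ∈ Icc a b :=
          ⟨(hp.mem_Icc hi.le).1.trans hs.1.le, hs.2.trans (hp.mem_Icc hi).2⟩
        linarith [abs_sub (φ (ξ i)) (φ s), hM _ (hp.tag_mem_Icc hi), hM s hs']
      · have := mul_le_mul_of_nonneg_left (hm i hi).le (by positivity : 0 ≤ 2 * M)
        have := hp.sub_pos hi
        nlinarith [(by positivity : 0 ≤ ε / (2 * (b - a)))]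
    · rw [if_neg hbad, add_zero]
      obtain ⟨k, hk, hxk, hxk'⟩ := hx.exists_lt_of_forall_notMem_Ico (hp.mem_Icc hi.le).1
        (hp.lt_succ i hi) (hp.mem_Icc hi).2 fun k hk h => hbad ⟨k, hk, h⟩
      exact abs_mul_sub_integral_le (hp.lt_succ i hi).le hφi' fun s hs =>
        hx.abs_sub_le k hk _ ⟨hxk.trans_le htag.1, htag.2.trans hxk'⟩ s
          ⟨hxk.trans hs.1, hs.2.trans hxk'⟩
  calc _ ≤ ∑ i ∈ range n, (ε / (2 * (b - a)) * (t (i + 1) - t i) +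
        if bad i then 2 * M * δ else 0) := sum_le_sum fun i hi => hterm i (mem_range.1 hi)
    _ = ε / 2 + ((range n).filter bad).card * (2 * M * δ) := by
        rw [sum_add_distrib, ← mul_sum, hp.sum_sub, ← sum_filter, sum_const, nsmul_eq_mul]
        field_simp [(sub_pos.2 hab).ne']
    _ ≤ ε / 2 + N * (2 * M * δ) := by gcongr
    _ ≤ ε := by linarith

end MemDminus

theorem sum_smul_sub_eq_sum_sub_smul {n : ℕ} (c : ℕ → ℝ) (S : ℕ → E) (hc : c n = 0)
    (hS : S 0 = 0) :
    ∑ i ∈ range n, c i • (S (i + 1) - S i) = ∑ i ∈ range n, (c i - c (i + 1)) • S (i + 1) := by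
  have shift : ∑ i ∈ range n, c i • S i = ∑ i ∈ range n, c (i + 1) • S (i + 1) := by
    have h := sum_range_succ' (fun i => c i • S i) n
    rwa [sum_range_succ, hc, hS, zero_smul, smul_zero, add_zero, add_zero] at h
  simp only [smul_sub, sub_smul, sum_sub_distrib, shift]

theorem riemannSum_smul_sub_riemannSum_smul {n : ℕ} {t ξ : ℕ → ℝ} {φ ψ : ℝ → ℝ} {f G : ℝ → E}
    (hψ : ψ (t n) = 0) :
    riemannSum (fun x => φ x • G x) n t ξ - riemannSum (fun x => ψ x • f x) n t ξ =
      ∑ i ∈ range n, ((t (i + 1) - t i) * φ (ξ i) - (ψ (t i) - ψ (t (i + 1)))) • G (ξ i) +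
      ∑ i ∈ range n, (ψ (t i) - ψ (t (i + 1))) • (G (ξ i) - riemannSum f (i + 1) t ξ) +
      ∑ i ∈ range n, (ψ (t i) - ψ (ξ i)) • ((t (i + 1) - t i) • f (ξ i)) := by
  set S : ℕ → E := fun k => riemannSum f k t ξ
  have hS : ∀ i, S (i + 1) - S i = (t (i + 1) - t i) • f (ξ i) := fun i => by
    simp [S, riemannSum, sum_range_succ]
  -- summation by parts moves the differences of `ψ` onto the partial Riemann sums of `f`
  have parts := sum_smul_sub_eq_sum_sub_smul (fun i => ψ (t i)) S hψ (by simp [S, riemannSum])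
  simp only [hS] at parts
  rw [← sub_zero (_ - _), ← sub_eq_zero.2 parts.symm, riemannSum, riemannSum]
  simp only [← sum_sub_distrib, ← sum_add_distrib]
  exact sum_congr rfl fun i _ => by module

theorem norm_riemannSum_smul_sub_riemannSum_smul_le {a b δ η η' K L M : ℝ} {n : ℕ}
    {t ξ : ℕ → ℝ} {φ ψ : ℝ → ℝ} {f G : ℝ → E}
    (hp : IsTaggedPartition a b n t ξ) (hm : MeshLT δ n t)
    (hψ : ∀ x ∈ Icc a b, ∀ y ∈ Icc a b, x ≤ y → |ψ x - ψ y| ≤ L * (y - x)) (hψb : ψ b = 0)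
    (hf : ∀ x ∈ Icc a b, ‖f x‖ ≤ M) (hG : ∀ x ∈ Icc a b, ‖G x‖ ≤ K)
    (hφψ : ∑ i ∈ range n, |(t (i + 1) - t i) * φ (ξ i) - (ψ (t i) - ψ (t (i + 1)))| ≤ η)
    (hGf : ∀ i < n, ‖G (ξ i) - riemannSum f (i + 1) t ξ‖ ≤ η') :
    ‖riemannSum (fun x => φ x • G x) n t ξ - riemannSum (fun x => ψ x • f x) n t ξ‖ ≤
      η * K + L * η' * (b - a) + L * δ * M * (b - a) := by
  have hab := hp.lt
  have hL : 0 ≤ L := nonneg_of_mul_nonneg_left ((abs_nonneg _).trans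
    (hψ a ⟨le_rfl, hab.le⟩ b ⟨hab.le, le_rfl⟩ hab.le)) (sub_pos.2 hab)
  rw [riemannSum_smul_sub_riemannSum_smul (hp.last ▸ hψb)]
  refine norm_add₃_le.trans (add_le_add (add_le_add ?_ ?_) ?_)
  · have hK : 0 ≤ K := (norm_nonneg _).trans (hG a ⟨le_rfl, hab.le⟩)
    calc _ ≤ ∑ i ∈ range n,
          |(t (i + 1) - t i) * φ (ξ i) - (ψ (t i) - ψ (t (i + 1)))| * K := by
          refine (norm_sum_le _ _).trans (sum_le_sum fun i hi => ?_)
          rw [norm_smul, Real.norm_eq_abs]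
          gcongr
          exact hG _ (hp.tag_mem_Icc (mem_range.1 hi))
      _ ≤ η * K := by rw [← sum_mul]; gcongr
  · refine hp.norm_sum_le fun i hi => ?_
    rw [norm_smul, Real.norm_eq_abs, mul_right_comm]
    exact mul_le_mul (hψ _ (hp.mem_Icc hi.le) _ (hp.mem_Icc hi) (hp.lt_succ i hi).le) (hGf i hi)
      (norm_nonneg _) (mul_nonneg hL (hp.sub_pos hi).le)
  · refine hp.norm_sum_le fun i hi => ?_
    have htag := hp.tag_mem i hi
    rw [norm_smul, norm_smul, Real.norm_eq_abs, Real.norm_of_nonneg (hp.sub_pos hi).le]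
    have hψξ : |ψ (t i) - ψ (ξ i)| ≤ L * δ :=
      (hψ _ (hp.mem_Icc hi.le) _ (hp.tag_mem_Icc hi) htag.1).trans
        (by gcongr; linarith [hm i hi, htag.2])
    calc |ψ (t i) - ψ (ξ i)| * ((t (i + 1) - t i) * ‖f (ξ i)‖)
        ≤ (L * δ) * ((t (i + 1) - t i) * M) :=
          mul_le_mul hψξ (by gcongr; exacts [(hp.sub_pos hi).le, hf _ (hp.tag_mem_Icc hi)])
            (mul_nonneg (hp.sub_pos hi).le (norm_nonneg _)) ((abs_nonneg _).trans hψξ)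
      _ = L * δ * M * (t (i + 1) - t i) := by ring

-- `hF` says nothing about `F a` (there is no partition of `[a, a]`), hence the `update`.
theorem hasRiemannIntegral_smul_update {f F : ℝ → E} {φ : ℝ → ℝ} {a b : ℝ} {J : E}
    (hab : a < b) (hφ : MemDminus a b φ) (hF : ∀ t ∈ Icc a b, HasRiemannIntegral f a t (F t))
    (hJ : HasRiemannIntegral (fun t => (∫ s in t..b, φ s) • f t) a b J) :
    HasRiemannIntegral (fun t => φ t • Function.update F a 0 t) a b J := by
  obtain ⟨L, hL⟩ := hφ.exists_bound hab
  obtain ⟨M, hM⟩ := (hF b (right_mem_Icc.2 hab.le)).exists_bound hab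
  have hL0 : 0 ≤ L := (abs_nonneg _).trans (hL a (left_mem_Icc.2 hab.le))
  have hM0 : 0 ≤ M := (norm_nonneg _).trans (hM a (left_mem_Icc.2 hab.le))
  have hφi := hφ.intervalIntegrable hab
  set ψ : ℝ → ℝ := fun t => ∫ s in t..b, φ s
  set G := Function.update F a 0
  have hG : ∀ x ∈ Icc a b, ‖G x‖ ≤ M * (b - a) := fun x hx => by
    have h := norm_update_sub_update_le hab.le hF hM le_rfl hx.1 hx.2
    rw [Function.update_self, sub_zero] at h
    exact h.trans (by gcongr; exact hx.2)
  rw [hasRiemannIntegral_iff] at hJ ⊢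
  intro ε hε
  set C := M * (b - a) + L * (b - a) + L * M * (b - a)
  have hC : 0 ≤ C := by positivity
  set η := ε / (2 * (C + 1))
  have hη : 0 < η := by positivity
  have hηC : η * C ≤ ε / 2 := by
    rw [div_mul_eq_mul_div, div_le_div_iff₀ (by positivity) two_pos]
    nlinarith
  obtain ⟨δ₁, hδ₁, H₁⟩ := hφ.exists_sum_abs_mul_sub_integral_le hab hη
  obtain ⟨δ₂, hδ₂, H₂⟩ := exists_forall_norm_update_tag_sub_riemannSum_le hab.le hF hM hη
  obtain ⟨δ₃, hδ₃, H₃⟩ := hJ (ε / 2) (half_pos hε)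
  refine ⟨min (min δ₁ δ₂) (min δ₃ η), by positivity, fun n t ξ hp hm => ?_⟩
  have hφψ : ∑ i ∈ range n, |(t (i + 1) - t i) * φ (ξ i) - (ψ (t i) - ψ (t (i + 1)))| ≤ η :=
    (sum_congr rfl fun i hi => by
      rw [integral_sub_integral_eq hφi hab.le (hp.mem_Icc (mem_range.1 hi).le)
        (hp.mem_Icc (mem_range.1 hi))]).trans_le
      (H₁ n t ξ hp (hm.mono ((min_le_left _ _).trans (min_le_left _ _))))
  have hclose := norm_riemannSum_smul_sub_riemannSum_smul_le hp
    (hm.mono ((min_le_right _ _).trans (min_le_right _ _)))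
    (fun x hx y hy hxy => abs_integral_sub_integral_le hφi hab.le hL hx hy hxy)
    intervalIntegral.integral_same hM hG hφψ
    (H₂ n t ξ hp (hm.mono ((min_le_left _ _).trans (min_le_right _ _))))
  calc ‖riemannSum (fun x => φ x • G x) n t ξ - J‖
      ≤ ‖riemannSum (fun x => φ x • G x) n t ξ - riemannSum (fun x => ψ x • f x) n t ξ‖ +
        ‖riemannSum (fun x => ψ x • f x) n t ξ - J‖ := norm_sub_le_norm_sub_add_norm_sub _ _ _
    _ < ε / 2 + ε / 2 := add_lt_add_of_le_of_lt (hclose.trans (by linarith))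
        (H₃ n t ξ hp (hm.mono ((min_le_right _ _).trans (min_le_left _ _))))
    _ = ε := add_halves ε

end

/-- Lemma A.3: if `f ∈ 𝓡_m([a,b],E)` and `F(t) = ∫_a^t f`, then `F ∈ 𝓡_m([a,b],E)` and
`∫_a^b φ(t) F(t) dt = ∫_a^b (∫_t^b φ(s) ds) f(t) dt` for every `φ ∈ D⁻[a,b]`. -/
theorem riemann_fubini {E : Type*} [NormedAddCommGroup E] [NormedSpace ℝ E]
    {a b : ℝ} (hab : a < b) (f : ℝ → E)
    (hf : ∀ φ : ℝ → ℝ, MemDminus a b φ →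
      ∃ I : E, HasRiemannIntegral (fun t => φ t • f t) a b I)
    (F : ℝ → E) (hF : ∀ t ∈ Set.Icc a b, HasRiemannIntegral f a t (F t)) :
    ∀ φ : ℝ → ℝ, MemDminus a b φ →
      ∃ J : E, HasRiemannIntegral (fun t => φ t • F t) a b J ∧
        HasRiemannIntegral (fun t => (∫ s in t..b, φ s) • f t) a b J := by
  intro φ hφ
  obtain ⟨J, hJ⟩ := hf _ (hφ.integral_right hab)
  refine ⟨J, (hasRiemannIntegral_smul_update hab hφ hF hJ).congr_of_eqOn_Ioc fun t ht => ?_, hJ⟩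
  simp [Function.update_of_ne ht.1.ne']
end
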